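/- arXiv:1803.04148 — 3 statements merged into one kernel-verified Lean document; each statement's English description precedes it below -/
import Mathlib

section
/- Let H be a norm on ℝ^N with dual norm H₀, both C^1 away from the origin with strictly convex unit balls. Then the map ξ ↦ H(ξ)∇H(ξ) is invertible on ℝ^N \ {0} with inverse x ↦ H₀(x)∇H₀(x). -/
/-!
For a convex, positively homogeneous `H` differentiable at `ξ ≠ 0`, Euler's identity
`⟪∇H ξ, ξ⟫ = H ξ` and the subgradient inequality `⟪∇H ξ, η⟫ ≤ H η` say that `∇H ξ` has dual
norm `1`, the supremum defining `H₀ (∇H ξ)` being attained at `ξ`. A differentiable function lying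
above a linear form that touches it at a point has that form as its gradient there; applied to
`H₀` at `H ξ • ∇H ξ` with the form `⟪ξ / H ξ, ·⟫` this gives `G (F ξ) = ξ`. Conversely, for
`x ≠ 0` compactness of the sphere gives some `ξ₀` with `H ξ₀ = 1` at which the supremum defining
`H₀ x` is attained, and the same criterion applied to `H` gives `F (H₀ x • ξ₀) = x`. So `F` is
onto, and `G` is also a right inverse.
-/

open Set InnerProductSpace Metric
open scoped RealInnerProductSpace

section PosHomogeneous

variable {E : Type*}

def PosHomogeneous [AddCommGroup E] [Module ℝ E] (f : E → ℝ) : Prop :=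
  ∀ t : ℝ, 0 < t → ∀ x, f (t • x) = t * f x

theorem PosHomogeneous.map_zero [AddCommGroup E] [Module ℝ E] {f : E → ℝ}
    (hf : PosHomogeneous f) : f 0 = 0 := by
  have h := hf 2 two_pos 0
  rw [smul_zero] at h
  linarith

variable [NormedAddCommGroup E] [NormedSpace ℝ E] {f : E → ℝ} {x : E}

theorem PosHomogeneous.fderiv_apply_self (hf : PosHomogeneous f)
    (hd : DifferentiableAt ℝ f x) : fderiv ℝ f x x = f x := by
  have hchain : HasDerivAt (fun t : ℝ => f (t • x)) (fderiv ℝ f x x) 1 := by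
    simpa [Function.comp_def] using hd.hasFDerivAt.comp_hasDerivAt_of_eq 1
      ((hasDerivAt_id (1 : ℝ)).smul_const x) (by simp)
  have hlin : HasDerivAt (fun t : ℝ => f (t • x)) (f x) 1 := by
    refine ((hasDerivAt_id (1 : ℝ)).mul_const (f x)).congr_of_eventuallyEq ?_ |>.congr_deriv
      (one_mul _)
    filter_upwards [eventually_gt_nhds one_pos] with t ht
    exact hf t ht x
  exact hchain.unique hlin

theorem ConvexOn.add_fderiv_sub_le (hf : ConvexOn ℝ univ f) (hd : DifferentiableAt ℝ f x)
    (y : E) : f x + fderiv ℝ f x (y - x) ≤ f y := by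
  have hline : ConvexOn ℝ univ (fun t : ℝ => f (x + t • (y - x))) := by
    simpa [Function.comp_def, AffineMap.lineMap_apply_module', add_comm]
      using hf.comp_affineMap (AffineMap.lineMap x y)
  have hderiv : HasDerivAt (fun t : ℝ => f (x + t • (y - x))) (fderiv ℝ f x (y - x)) 0 := by
    simpa [Function.comp_def] using hd.hasFDerivAt.comp_hasDerivAt_of_eq 0
      (((hasDerivAt_id (0 : ℝ)).smul_const (y - x)).const_add x) (by simp)
  have h := hline.le_slope_of_hasDerivAt (mem_univ 0) (mem_univ 1) one_pos hderiv
  simp only [slope, sub_zero, one_smul, zero_smul, add_zero, add_sub_cancel, vsub_eq_sub,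
    smul_eq_mul, inv_one, one_mul] at h
  linarith

theorem ConvexOn.fderiv_apply_le_of_posHomogeneous (hf : ConvexOn ℝ univ f)
    (hhom : PosHomogeneous f) (hd : DifferentiableAt ℝ f x) (y : E) : fderiv ℝ f x y ≤ f y := by
  have h := hf.add_fderiv_sub_le hd y
  rw [map_sub, hhom.fderiv_apply_self hd] at h
  linarith

end PosHomogeneous

section Gradient

variable {E : Type*} [NormedAddCommGroup E] [InnerProductSpace ℝ E] [CompleteSpace E]
  {f : E → ℝ} {p w : E}

theorem gradient_eq_of_inner_le (hd : DifferentiableAt ℝ f p) (hle : ∀ y, ⟪w, y⟫ ≤ f y)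
    (heq : ⟪w, p⟫ = f p) : gradient f p = w := by
  have hmin : IsLocalMin (fun y => f y - toDual ℝ E w y) p :=
    Filter.Eventually.of_forall fun y => by simp only [toDual_apply_apply]; linarith [hle y]
  have hzero := hmin.fderiv_eq_zero
  rw [fderiv_fun_sub hd (toDual ℝ E w).differentiableAt, ContinuousLinearMap.fderiv,
    sub_eq_zero] at hzero
  rw [gradient, hzero, LinearIsometryEquiv.symm_apply_apply]

theorem PosHomogeneous.inner_gradient_self (hf : PosHomogeneous f)
    (hd : DifferentiableAt ℝ f p) : ⟪gradient f p, p⟫ = f p := by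
  rw [gradient, toDual_symm_apply, hf.fderiv_apply_self hd]

theorem ConvexOn.inner_gradient_le_of_posHomogeneous (hconv : ConvexOn ℝ univ f)
    (hf : PosHomogeneous f) (hd : DifferentiableAt ℝ f p) (y : E) : ⟪gradient f p, y⟫ ≤ f y := by
  rw [gradient, toDual_symm_apply]
  exact hconv.fderiv_apply_le_of_posHomogeneous hf hd y

end Gradient

section Polar

variable {E : Type*} [NormedAddCommGroup E] [InnerProductSpace ℝ E] {H : E → ℝ}

noncomputable def polarGauge (H : E → ℝ) (x : E) : ℝ :=
  ⨆ ξ : {ξ : E // ξ ≠ 0}, ⟪x, ξ.1⟫ / H ξ.1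

theorem polarGauge_smul {t : ℝ} (ht : 0 ≤ t) (x : E) :
    polarGauge H (t • x) = t * polarGauge H x := by
  simp only [polarGauge, Real.mul_iSup_of_nonneg ht, real_inner_smul_left, mul_div_assoc]

theorem posHomogeneous_polarGauge : PosHomogeneous (polarGauge H) :=
  fun _ ht => polarGauge_smul ht.le

theorem exists_forall_inner_div_le [FiniteDimensional ℝ E] [Nontrivial E]
    (hhom : PosHomogeneous H) (hcont : ∀ ξ ≠ 0, ContinuousAt H ξ) (hpos : ∀ ξ ≠ 0, 0 < H ξ)
    (x : E) : ∃ ξ₀, H ξ₀ = 1 ∧ ∀ ξ ≠ 0, ⟪x, ξ⟫ / H ξ ≤ ⟪x, ξ₀⟫ := by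
  set g : E → ℝ := fun ξ => ⟪x, ξ⟫ / H ξ
  have hg : ∀ t : ℝ, 0 < t → ∀ ξ, g (t • ξ) = g ξ := fun t ht ξ => by
    simp only [g, real_inner_smul_right, hhom t ht, mul_div_mul_left _ _ ht.ne']
  have hsphere : ∀ ζ ∈ sphere (0 : E) 1, ζ ≠ 0 := fun ζ hζ => ne_zero_of_mem_unit_sphere ⟨ζ, hζ⟩
  obtain ⟨ζ, hζ, hmax⟩ := (isCompact_sphere (0 : E) 1).exists_isMaxOn
    (NormedSpace.sphere_nonempty.2 zero_le_one) fun ζ hζ =>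
      ((continuous_const.inner continuous_id).continuousAt.div (hcont ζ (hsphere ζ hζ))
        (hpos ζ (hsphere ζ hζ)).ne').continuousWithinAt
  have hHζ := hpos ζ (hsphere ζ hζ)
  refine ⟨(H ζ)⁻¹ • ζ, by rw [hhom _ (inv_pos.2 hHζ), inv_mul_cancel₀ hHζ.ne'], fun ξ hξ => ?_⟩
  have hξ' : ‖ξ‖⁻¹ • ξ ∈ sphere (0 : E) 1 := by
    rw [mem_sphere_zero_iff_norm]; exact norm_smul_inv_norm hξ
  calc g ξ = g (‖ξ‖⁻¹ • ξ) := (hg _ (inv_pos.2 (norm_pos_iff.2 hξ)) ξ).symm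
    _ ≤ g ζ := hmax hξ'
    _ = g ((H ζ)⁻¹ • ζ) := (hg _ (inv_pos.2 hHζ) ζ).symm
    _ = ⟪x, (H ζ)⁻¹ • ζ⟫ := by
      simp only [g, hhom _ (inv_pos.2 hHζ), inv_mul_cancel₀ hHζ.ne', div_one]

theorem polarGauge_eq_inner_of_forall_le (hhom : PosHomogeneous H) {x ξ₀ : E} (h₀ : H ξ₀ = 1)
    (hle : ∀ ξ ≠ 0, ⟪x, ξ⟫ / H ξ ≤ ⟪x, ξ₀⟫) : polarGauge H x = ⟪x, ξ₀⟫ := by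
  have hξ₀ : ξ₀ ≠ 0 := by rintro rfl; simp [hhom.map_zero] at h₀
  have : Nonempty {ξ : E // ξ ≠ 0} := ⟨⟨ξ₀, hξ₀⟩⟩
  refine le_antisymm (ciSup_le fun ξ => hle ξ.1 ξ.2) ?_
  have hbdd : BddAbove (range fun ξ : {ξ : E // ξ ≠ 0} => ⟪x, ξ.1⟫ / H ξ.1) :=
    ⟨_, forall_mem_range.2 fun ξ => hle ξ.1 ξ.2⟩
  calc ⟪x, ξ₀⟫ = ⟪x, ξ₀⟫ / H ξ₀ := by rw [h₀, div_one]
    _ ≤ polarGauge H x := le_ciSup hbdd ⟨ξ₀, hξ₀⟩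

variable [FiniteDimensional ℝ E] [Nontrivial E]

theorem exists_inner_eq_polarGauge (hhom : PosHomogeneous H)
    (hcont : ∀ ξ ≠ 0, ContinuousAt H ξ) (hpos : ∀ ξ ≠ 0, 0 < H ξ) (x : E) :
    ∃ ξ₀, H ξ₀ = 1 ∧ ⟪x, ξ₀⟫ = polarGauge H x := by
  obtain ⟨ξ₀, h₀, hle⟩ := exists_forall_inner_div_le hhom hcont hpos x
  exact ⟨ξ₀, h₀, (polarGauge_eq_inner_of_forall_le hhom h₀ hle).symm⟩

theorem inner_le_polarGauge_mul (hhom : PosHomogeneous H)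
    (hcont : ∀ ξ ≠ 0, ContinuousAt H ξ) (hpos : ∀ ξ ≠ 0, 0 < H ξ) (x ξ : E) :
    ⟪x, ξ⟫ ≤ polarGauge H x * H ξ := by
  rcases eq_or_ne ξ 0 with rfl | hξ
  · simp [hhom.map_zero]
  obtain ⟨ξ₀, h₀, hle⟩ := exists_forall_inner_div_le hhom hcont hpos x
  rw [polarGauge_eq_inner_of_forall_le hhom h₀ hle, ← div_le_iff₀ (hpos ξ hξ)]
  exact hle ξ hξ

end Polar

section DualityMap

variable {E : Type*} [NormedAddCommGroup E] [InnerProductSpace ℝ E] [FiniteDimensional ℝ E]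
  {H : E → ℝ}

noncomputable def dualityMap (f : E → ℝ) (x : E) : E :=
  f x • gradient f x

theorem dualityMap_zero {f : E → ℝ} (hf : PosHomogeneous f) : dualityMap f 0 = 0 := by
  rw [dualityMap, hf.map_zero, zero_smul]

theorem polarGauge_gradient (hconv : ConvexOn ℝ univ H) (hhom : PosHomogeneous H)
    (hpos : ∀ ξ ≠ 0, 0 < H ξ) (hdiff : ∀ ξ ≠ 0, DifferentiableAt ℝ H ξ) {ξ : E} (hξ : ξ ≠ 0) :
    polarGauge H (gradient H ξ) = 1 := by
  have := nontrivial_of_ne ξ 0 hξ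
  have hcont : ∀ ξ ≠ 0, ContinuousAt H ξ := fun ξ hξ => (hdiff ξ hξ).continuousAt
  obtain ⟨ξ₀, h₀, heq⟩ := exists_inner_eq_polarGauge hhom hcont hpos (gradient H ξ)
  refine le_antisymm ?_ ?_
  · rw [← heq, ← h₀]
    exact hconv.inner_gradient_le_of_posHomogeneous hhom (hdiff ξ hξ) ξ₀
  · have h := inner_le_polarGauge_mul hhom hcont hpos (gradient H ξ) ξ
    rw [hhom.inner_gradient_self (hdiff ξ hξ)] at h
    exact (le_mul_iff_one_le_left (hpos ξ hξ)).1 h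

theorem polarGauge_dualityMap (hconv : ConvexOn ℝ univ H) (hhom : PosHomogeneous H)
    (hpos : ∀ ξ ≠ 0, 0 < H ξ) (hdiff : ∀ ξ ≠ 0, DifferentiableAt ℝ H ξ) {ξ : E} (hξ : ξ ≠ 0) :
    polarGauge H (dualityMap H ξ) = H ξ := by
  rw [dualityMap, polarGauge_smul (hpos ξ hξ).le,
    polarGauge_gradient hconv hhom hpos hdiff hξ, mul_one]

theorem dualityMap_ne_zero (hconv : ConvexOn ℝ univ H) (hhom : PosHomogeneous H)
    (hpos : ∀ ξ ≠ 0, 0 < H ξ) (hdiff : ∀ ξ ≠ 0, DifferentiableAt ℝ H ξ) {ξ : E} (hξ : ξ ≠ 0) :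
    dualityMap H ξ ≠ 0 := by
  intro h
  have h' := polarGauge_dualityMap hconv hhom hpos hdiff hξ
  rw [h, posHomogeneous_polarGauge.map_zero] at h'
  exact (hpos ξ hξ).ne h'

theorem dualityMap_polarGauge_dualityMap (hconv : ConvexOn ℝ univ H) (hhom : PosHomogeneous H)
    (hpos : ∀ ξ ≠ 0, 0 < H ξ) (hdiff : ∀ ξ ≠ 0, DifferentiableAt ℝ H ξ) {ξ : E} (hξ : ξ ≠ 0)
    (hd₀ : DifferentiableAt ℝ (polarGauge H) (dualityMap H ξ)) :
    dualityMap (polarGauge H) (dualityMap H ξ) = ξ := by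
  have := nontrivial_of_ne ξ 0 hξ
  have hcont : ∀ ξ ≠ 0, ContinuousAt H ξ := fun ξ hξ => (hdiff ξ hξ).continuousAt
  have hHξ := hpos ξ hξ
  have hgrad : gradient (polarGauge H) (dualityMap H ξ) = (H ξ)⁻¹ • ξ := by
    refine gradient_eq_of_inner_le hd₀ (fun y => ?_) ?_
    · rw [real_inner_smul_left, real_inner_comm, inv_mul_le_iff₀ hHξ, mul_comm]
      exact inner_le_polarGauge_mul hhom hcont hpos y ξ
    · rw [polarGauge_dualityMap hconv hhom hpos hdiff hξ, dualityMap, real_inner_smul_left,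
        real_inner_smul_right, real_inner_comm, hhom.inner_gradient_self (hdiff ξ hξ),
        inv_mul_cancel_left₀ hHξ.ne']
  rw [dualityMap, hgrad, polarGauge_dualityMap hconv hhom hpos hdiff hξ, smul_inv_smul₀ hHξ.ne']

theorem exists_dualityMap_eq (hhom : PosHomogeneous H) (hpos : ∀ ξ ≠ 0, 0 < H ξ)
    (hdiff : ∀ ξ ≠ 0, DifferentiableAt ℝ H ξ) {x : E} (hx : x ≠ 0) :
    ∃ ζ, dualityMap H ζ = x := by
  have := nontrivial_of_ne x 0 hx
  have hcont : ∀ ξ ≠ 0, ContinuousAt H ξ := fun ξ hξ => (hdiff ξ hξ).continuousAt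
  obtain ⟨ξ₀, h₀, heq⟩ := exists_inner_eq_polarGauge hhom hcont hpos x
  set P := polarGauge H x
  have hP : 0 < P := by
    have h := inner_le_polarGauge_mul hhom hcont hpos x x
    rw [real_inner_self_eq_norm_sq] at h
    exact pos_of_mul_pos_left ((pow_pos (norm_pos_iff.2 hx) 2).trans_le h) (hpos x hx).le
  have hHζ : H (P • ξ₀) = P := by rw [hhom P hP, h₀, mul_one]
  have hζ : P • ξ₀ ≠ 0 := fun h => by simp [h, hhom.map_zero, hP.ne] at hHζ
  have hgrad : gradient H (P • ξ₀) = P⁻¹ • x := by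
    refine gradient_eq_of_inner_le (hdiff _ hζ) (fun y => ?_) ?_
    · rw [real_inner_smul_left, inv_mul_le_iff₀ hP]
      exact inner_le_polarGauge_mul hhom hcont hpos x y
    · rw [hHζ, real_inner_smul_left, real_inner_smul_right, heq, inv_mul_cancel_left₀ hP.ne']
  exact ⟨P • ξ₀, by rw [dualityMap, hgrad, hHζ, smul_inv_smul₀ hP.ne']⟩

end DualityMap

theorem H_gradH_invertible_general
    (N : ℕ) (H H₀ : EuclideanSpace ℝ (Fin N) → ℝ)
    (hconv : ConvexOn ℝ Set.univ H)
    (hpos : ∀ ξ, 0 ≤ H ξ)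
    (hdef : ∀ ξ, H ξ = 0 ↔ ξ = 0)
    (hhom : ∀ (t : ℝ) (ξ : EuclideanSpace ℝ (Fin N)), H (t • ξ) = |t| * H ξ)
    (hdiff : ∀ ξ : EuclideanSpace ℝ (Fin N), ξ ≠ 0 → DifferentiableAt ℝ H ξ)
    (hdual : ∀ x, H₀ x
      = ⨆ ξ : {ξ : EuclideanSpace ℝ (Fin N) // ξ ≠ 0}, (inner ℝ x ξ.1 : ℝ) / H ξ.1)
    (hdiff₀ : ∀ x : EuclideanSpace ℝ (Fin N), x ≠ 0 → DifferentiableAt ℝ H₀ x)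
    (F G : EuclideanSpace ℝ (Fin N) → EuclideanSpace ℝ (Fin N))
    (hF : ∀ ξ, ξ ≠ 0 → F ξ = H ξ • gradient H ξ) (hF0 : F 0 = 0)
    (hG : ∀ x, x ≠ 0 → G x = H₀ x • gradient H₀ x) (hG0 : G 0 = 0) :
    Function.LeftInverse G F ∧ Function.RightInverse G F := by
  have hhom' : PosHomogeneous H := fun t ht ξ => by rw [hhom, abs_of_pos ht]
  have hpos' : ∀ ξ ≠ 0, 0 < H ξ := fun ξ hξ => (hpos ξ).lt_of_ne' (mt (hdef ξ).1 hξ)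
  obtain rfl : H₀ = polarGauge H := funext hdual
  obtain rfl : F = dualityMap H := funext fun ξ => by
    rcases eq_or_ne ξ 0 with rfl | hξ
    · rw [hF0, dualityMap_zero hhom']
    · exact hF ξ hξ
  obtain rfl : G = dualityMap (polarGauge H) := funext fun x => by
    rcases eq_or_ne x 0 with rfl | hx
    · rw [hG0, dualityMap_zero posHomogeneous_polarGauge]
    · exact hG x hx
  have hleft : Function.LeftInverse (dualityMap (polarGauge H)) (dualityMap H) := fun ξ => by
    rcases eq_or_ne ξ 0 with rfl | hξ
    · rw [dualityMap_zero hhom', dualityMap_zero posHomogeneous_polarGauge]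
    · exact dualityMap_polarGauge_dualityMap hconv hhom' hpos' hdiff hξ
        (hdiff₀ _ (dualityMap_ne_zero hconv hhom' hpos' hdiff hξ))
  refine ⟨hleft, fun x => ?_⟩
  rcases eq_or_ne x 0 with rfl | hx
  · rw [dualityMap_zero posHomogeneous_polarGauge, dualityMap_zero hhom']
  · obtain ⟨ζ, rfl⟩ := exists_dualityMap_eq hhom' hpos' hdiff hx
    rw [hleft ζ]

/-- For a norm `H` with dual norm `H₀`, both `C¹` away from the origin with
strictly convex unit balls, the map `ξ ↦ H(ξ)∇H(ξ)` (extended by `0` at the origin) is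
invertible with inverse `x ↦ H₀(x)∇H₀(x)`. -/
theorem H_gradH_invertible
    (N : ℕ) (hN : 0 < N) (H H₀ : EuclideanSpace ℝ (Fin N) → ℝ)
    (hconv : ConvexOn ℝ Set.univ H)
    (hpos : ∀ ξ, 0 ≤ H ξ)
    (hdef : ∀ ξ, H ξ = 0 ↔ ξ = 0)
    (hhom : ∀ (t : ℝ) (ξ : EuclideanSpace ℝ (Fin N)), H (t • ξ) = |t| * H ξ)
    (hdiff : ∀ ξ : EuclideanSpace ℝ (Fin N), ξ ≠ 0 → DifferentiableAt ℝ H ξ)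
    (hstrict : StrictConvex ℝ {ξ : EuclideanSpace ℝ (Fin N) | H ξ < 1})
    (hdual : ∀ x, H₀ x
      = ⨆ ξ : {ξ : EuclideanSpace ℝ (Fin N) // ξ ≠ 0}, (inner ℝ x ξ.1 : ℝ) / H ξ.1)
    (hdiff₀ : ∀ x : EuclideanSpace ℝ (Fin N), x ≠ 0 → DifferentiableAt ℝ H₀ x)
    (hstrict₀ : StrictConvex ℝ {x : EuclideanSpace ℝ (Fin N) | H₀ x < 1})
    (F G : EuclideanSpace ℝ (Fin N) → EuclideanSpace ℝ (Fin N))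
    (hF : ∀ ξ, ξ ≠ 0 → F ξ = H ξ • gradient H ξ) (hF0 : F 0 = 0)
    (hG : ∀ x, x ≠ 0 → G x = H₀ x • gradient H₀ x) (hG0 : G 0 = 0) :
    Function.LeftInverse G F ∧ Function.RightInverse G F :=
  H_gradH_invertible_general N H H₀ hconv hpos hdef hhom hdiff hdual hdiff₀ F G hF hF0 hG hG0
end

section
/- Let H be a C^1 norm (away from 0) on ℝ^N with strictly convex unit ball, H₀ its dual norm, and v(x) = (C_r − C_R)·(H₀(x)^{2−N} − R^{2−N})/(r^{2−N} − R^{2−N}) + C_R for N ≥ 3 (respectively v(x) = (C_r − C_R)·ln(H₀(x)/R)/ln(r/R) + C_R for N = 2), defined for r ≤ H₀(x) ≤ R with 0 < r < R. Then v solves the anisotropic boundary value problem: Δ_H v = 0 in the annulus {r < H₀(x) < R}, v = C_r on {H₀ = r} and v = C_R on {H₀ = R}, where Δ_H v = div(H(∇v)∇_ξH(∇v)). -/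
/-!
For `y ≠ 0`, Euler's identity and the subgradient inequality for the convex, homogeneous `H` and
`H₀` give `H (∇H₀ y) = 1`; moreover `∇H₀ y` minimises `ξ ↦ H₀ y * H ξ - ⟪y, ξ⟫ ≥ 0`, so
`∇H (∇H₀ y) = y / H₀ y`. Hence for radial `v = f ∘ H₀` the flux `H(∇v) ∇H(∇v)` is the field
`(f'(H₀ x) / H₀ x) • x`. Both profiles satisfy `f'(s) = c s^(1-N)`, so the flux is `c H₀^(-N) x`,
whose divergence `N c H₀^(-N) - N c H₀^(-N-1) ⟪∇H₀ x, x⟫` vanishes since `⟪∇H₀ x, x⟫ = H₀ x`.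
-/

open Real Set Filter Module
open scoped RealInnerProductSpace Topology Gradient

section Homogeneous

variable {E : Type*} [NormedAddCommGroup E] [NormedSpace ℝ E] {g : E → ℝ} {L : E →L[ℝ] ℝ}
  {z : E}

theorem HasFDerivAt.apply_self_of_homogeneous (hg : HasFDerivAt g L z)
    (hhom : ∀ s : ℝ, 0 < s → g (s • z) = s * g z) : L z = g z := by
  have hray : HasDerivAt (fun s : ℝ => g (s • z)) (L z) 1 := by
    have hline := (hasDerivAt_id' (1 : ℝ)).smul_const z
    rw [one_smul] at hline
    rw [← one_smul ℝ z] at hg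
    exact hg.comp_hasDerivAt (x := (1 : ℝ)) hline
  have hlin : (fun s : ℝ => g (s • z)) =ᶠ[𝓝 1] fun s => s * g z :=
    eventually_of_mem (Ioi_mem_nhds one_pos) hhom
  simpa using hray.unique (((hasDerivAt_id (1 : ℝ)).mul_const (g z)).congr_of_eventuallyEq hlin)

theorem ConvexOn.add_apply_sub_le_of_hasFDerivAt (hconv : ConvexOn ℝ univ g)
    (hg : HasFDerivAt g L z) (w : E) : g z + L (w - z) ≤ g w := by
  have hψ : ConvexOn ℝ univ (g ∘ AffineMap.lineMap (k := ℝ) z w) := by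
    simpa using hconv.comp_affineMap (AffineMap.lineMap (k := ℝ) z w)
  have hψ' : HasDerivAt (g ∘ AffineMap.lineMap (k := ℝ) z w) (L (w - z)) 0 := by
    rw [← AffineMap.lineMap_apply_zero (k := ℝ) z w] at hg
    exact hg.comp_hasDerivAt 0 AffineMap.hasDerivAt_lineMap
  have := hψ.le_slope_of_hasDerivAt (mem_univ 0) (mem_univ 1) one_pos hψ'
  simp only [slope, sub_zero, inv_one, one_smul, Function.comp_apply,
    AffineMap.lineMap_apply_one, AffineMap.lineMap_apply_zero, vsub_eq_sub] at this
  linarith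

theorem ConvexOn.hasFDerivAt_apply_le (hconv : ConvexOn ℝ univ g)
    (hhom : ∀ s : ℝ, 0 < s → ∀ w, g (s • w) = s * g w) (hg : HasFDerivAt g L z) (w : E) :
    L w ≤ g w := by
  have := hconv.add_apply_sub_le_of_hasFDerivAt hg w
  rw [map_sub, hg.apply_self_of_homogeneous fun s hs => hhom s hs z] at this
  linarith

end Homogeneous

section Coercive

variable {E : Type*} [NormedAddCommGroup E] {H : E → ℝ} {m : ℝ}

theorem pos_of_mul_norm_le (hm : 0 < m) (hH : ∀ ξ, m * ‖ξ‖ ≤ H ξ) {ξ : E} (hξ : ξ ≠ 0) :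
    0 < H ξ :=
  (mul_pos hm (norm_pos_iff.2 hξ)).trans_le (hH ξ)

variable [NormedSpace ℝ E]

theorem exists_pos_mul_norm_le [FiniteDimensional ℝ E] [Nontrivial E]
    (hcont : ContinuousOn H {0}ᶜ) (hpos : ∀ ξ, ξ ≠ 0 → 0 < H ξ)
    (hhom : ∀ (t : ℝ) (ξ : E), H (t • ξ) = |t| * H ξ) : ∃ m > 0, ∀ ξ, m * ‖ξ‖ ≤ H ξ := by
  have hsphere : Metric.sphere (0 : E) 1 ⊆ {0}ᶜ := fun ξ hξ h => by simp_all
  obtain ⟨ξ₀, hξ₀, hmin⟩ := (isCompact_sphere (0 : E) 1).exists_isMinOn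
    (NormedSpace.sphere_nonempty.2 zero_le_one) (hcont.mono hsphere)
  refine ⟨H ξ₀, hpos ξ₀ (hsphere hξ₀), fun ξ => ?_⟩
  rcases eq_or_ne ξ 0 with rfl | hξ
  · have h0 : H 0 = 0 := by simpa using hhom 0 0
    simp [h0]
  · have hunit : ‖ξ‖⁻¹ • ξ ∈ Metric.sphere (0 : E) 1 := by simp [norm_smul, hξ]
    have hscale : H ξ = ‖ξ‖ * H (‖ξ‖⁻¹ • ξ) := by
      rw [hhom, abs_of_pos (inv_pos.2 (norm_pos_iff.2 hξ)), ← mul_assoc,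
        mul_inv_cancel₀ (norm_ne_zero_iff.2 hξ), one_mul]
    rw [hscale, mul_comm]
    exact mul_le_mul_of_nonneg_left (hmin hunit) (norm_nonneg ξ)

end Coercive

section DualNorm

variable {E : Type*} [NormedAddCommGroup E] [InnerProductSpace ℝ E] {H : E → ℝ} {m : ℝ}

-- A genuine supremum only for coercive `H` (`bddAbove_range_inner_div`); otherwise `⨆` is junk.
noncomputable def dualNorm (H : E → ℝ) (x : E) : ℝ :=
  ⨆ ξ : {ξ : E // ξ ≠ 0}, ⟪x, ξ.1⟫ / H ξ.1

theorem bddAbove_range_inner_div (hm : 0 < m) (hH : ∀ ξ, m * ‖ξ‖ ≤ H ξ) (x : E) :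
    BddAbove (range fun ξ : {ξ : E // ξ ≠ 0} => ⟪x, ξ.1⟫ / H ξ.1) := by
  refine ⟨‖x‖ / m, ?_⟩
  rintro - ⟨⟨ξ, hξ⟩, rfl⟩
  rw [div_le_div_iff₀ (pos_of_mul_norm_le hm hH hξ) hm]
  calc ⟪x, ξ⟫ * m ≤ ‖x‖ * ‖ξ‖ * m := by gcongr; exact real_inner_le_norm x ξ
    _ = ‖x‖ * (m * ‖ξ‖) := by ring
    _ ≤ ‖x‖ * H ξ := by gcongr; exact hH ξ

theorem inner_le_dualNorm_mul (hm : 0 < m) (hH : ∀ ξ, m * ‖ξ‖ ≤ H ξ) (x : E) {ξ : E}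
    (hξ : ξ ≠ 0) : ⟪x, ξ⟫ ≤ dualNorm H x * H ξ := by
  rw [← div_le_iff₀ (pos_of_mul_norm_le hm hH hξ)]
  exact le_ciSup (bddAbove_range_inner_div hm hH x) (⟨ξ, hξ⟩ : {ξ : E // ξ ≠ 0})

theorem dualNorm_le_of_inner_le [Nontrivial E] (hm : 0 < m) (hH : ∀ ξ, m * ‖ξ‖ ≤ H ξ)
    {x : E} {c : ℝ} (h : ∀ ξ, ξ ≠ 0 → ⟪x, ξ⟫ ≤ c * H ξ) : dualNorm H x ≤ c := by
  have : Nonempty {ξ : E // ξ ≠ 0} := nonempty_subtype.2 (exists_ne 0)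
  exact ciSup_le fun ξ => (div_le_iff₀ (pos_of_mul_norm_le hm hH ξ.2)).2 (h ξ.1 ξ.2)

theorem dualNorm_smul {s : ℝ} (hs : 0 ≤ s) (x : E) : dualNorm H (s • x) = s * dualNorm H x := by
  simp only [dualNorm, Real.mul_iSup_of_nonneg hs, real_inner_smul_left, mul_div_assoc]

theorem dualNorm_zero : dualNorm H (0 : E) = 0 := by
  simpa using dualNorm_smul (H := H) le_rfl (0 : E)

theorem dualNorm_pos (hm : 0 < m) (hH : ∀ ξ, m * ‖ξ‖ ≤ H ξ) {x : E} (hx : x ≠ 0) :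
    0 < dualNorm H x := by
  have hxx := inner_le_dualNorm_mul hm hH x hx
  rw [real_inner_self_eq_norm_sq] at hxx
  exact pos_of_mul_pos_left ((pow_pos (norm_pos_iff.2 hx) 2).trans_le hxx)
    (pos_of_mul_norm_le hm hH hx).le

theorem dualNorm_add_le [Nontrivial E] (hm : 0 < m) (hH : ∀ ξ, m * ‖ξ‖ ≤ H ξ) (x y : E) :
    dualNorm H (x + y) ≤ dualNorm H x + dualNorm H y :=
  dualNorm_le_of_inner_le hm hH fun ξ hξ => by
    rw [inner_add_left, add_mul]
    exact add_le_add (inner_le_dualNorm_mul hm hH x hξ) (inner_le_dualNorm_mul hm hH y hξ)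

theorem convexOn_dualNorm [Nontrivial E] (hm : 0 < m) (hH : ∀ ξ, m * ‖ξ‖ ≤ H ξ) :
    ConvexOn ℝ univ (dualNorm H) := by
  refine ⟨convex_univ, fun x _ y _ a b ha hb _ => ?_⟩
  calc dualNorm H (a • x + b • y) ≤ dualNorm H (a • x) + dualNorm H (b • y) :=
        dualNorm_add_le hm hH _ _
    _ = a * dualNorm H x + b * dualNorm H y := by rw [dualNorm_smul ha, dualNorm_smul hb]

theorem fderiv_dualNorm_apply_self {y : E} (hy : DifferentiableAt ℝ (dualNorm H) y) :
    fderiv ℝ (dualNorm H) y y = dualNorm H y :=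
  hy.hasFDerivAt.apply_self_of_homogeneous fun _ hs => dualNorm_smul hs.le y

end DualNorm

section Gradient

variable {E : Type*} [NormedAddCommGroup E] [InnerProductSpace ℝ E] [CompleteSpace E]

theorem HasDerivAt.hasGradientAt_comp {f : ℝ → ℝ} {d : ℝ} {g : E → ℝ} {g' x : E}
    (hf : HasDerivAt f d (g x)) (hg : HasGradientAt g g' x) :
    HasGradientAt (f ∘ g) (d • g') x := by
  rw [hasGradientAt_iff_hasFDerivAt, map_smulₛₗ, RCLike.conj_to_real]
  exact hf.comp_hasFDerivAt x hg.hasFDerivAt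

variable {H : E → ℝ} {m : ℝ}

theorem inner_gradient_dualNorm_self {y : E} (hy : DifferentiableAt ℝ (dualNorm H) y) :
    ⟪y, ∇ (dualNorm H) y⟫ = dualNorm H y := by
  rw [real_inner_comm, inner_gradient_left, fderiv_dualNorm_apply_self hy]

theorem gradient_dualNorm_ne_zero (hm : 0 < m) (hH : ∀ ξ, m * ‖ξ‖ ≤ H ξ) {y : E} (hy : y ≠ 0)
    (hy' : DifferentiableAt ℝ (dualNorm H) y) : ∇ (dualNorm H) y ≠ 0 := fun h => by
  have := inner_gradient_dualNorm_self hy'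
  rw [h, inner_zero_right] at this
  exact (dualNorm_pos hm hH hy).ne this

theorem apply_gradient_dualNorm_eq_one [Nontrivial E] (hm : 0 < m) (hH : ∀ ξ, m * ‖ξ‖ ≤ H ξ)
    (hconv : ConvexOn ℝ univ H) (hhom : ∀ (t : ℝ) (ξ : E), H (t • ξ) = |t| * H ξ)
    (hdiff : ∀ ξ, ξ ≠ 0 → DifferentiableAt ℝ H ξ) {y : E} (hy : y ≠ 0)
    (hy' : DifferentiableAt ℝ (dualNorm H) y) : H (∇ (dualNorm H) y) = 1 := by
  set ξ₀ := ∇ (dualNorm H) y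
  have hξ₀ : ξ₀ ≠ 0 := gradient_dualNorm_ne_zero hm hH hy hy'
  have hposhom : ∀ s : ℝ, 0 < s → ∀ ξ, H (s • ξ) = s * H ξ := fun s hs ξ => by
    rw [hhom, abs_of_pos hs]
  set η := ∇ H ξ₀
  have hη : dualNorm H η ≤ 1 := dualNorm_le_of_inner_le hm hH fun ξ _ => by
    rw [inner_gradient_left, one_mul]
    exact hconv.hasFDerivAt_apply_le hposhom (hdiff ξ₀ hξ₀).hasFDerivAt ξ
  apply le_antisymm
  · calc H ξ₀ = fderiv ℝ (dualNorm H) y η := by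
          rw [← inner_gradient_left, real_inner_comm, inner_gradient_left,
            (hdiff ξ₀ hξ₀).hasFDerivAt.apply_self_of_homogeneous fun s hs => hposhom s hs ξ₀]
      _ ≤ dualNorm H η := (convexOn_dualNorm hm hH).hasFDerivAt_apply_le
          (fun _ hs => dualNorm_smul hs.le) hy'.hasFDerivAt η
      _ ≤ 1 := hη
  · have hle := inner_le_dualNorm_mul hm hH y hξ₀
    rw [inner_gradient_dualNorm_self hy'] at hle
    nlinarith [dualNorm_pos hm hH hy]

theorem gradient_apply_gradient_dualNorm [Nontrivial E] (hm : 0 < m)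
    (hH : ∀ ξ, m * ‖ξ‖ ≤ H ξ) (hconv : ConvexOn ℝ univ H)
    (hhom : ∀ (t : ℝ) (ξ : E), H (t • ξ) = |t| * H ξ)
    (hdiff : ∀ ξ, ξ ≠ 0 → DifferentiableAt ℝ H ξ) {y : E} (hy : y ≠ 0)
    (hy' : DifferentiableAt ℝ (dualNorm H) y) :
    ∇ H (∇ (dualNorm H) y) = (dualNorm H y)⁻¹ • y := by
  set ξ₀ := ∇ (dualNorm H) y
  have hξ₀ : ξ₀ ≠ 0 := gradient_dualNorm_ne_zero hm hH hy hy'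
  have hH₀y := dualNorm_pos hm hH hy
  have hmin : IsLocalMin (fun ξ => dualNorm H y * H ξ - ⟪y, ξ⟫) ξ₀ := by
    refine Eventually.of_forall fun ξ => ?_
    dsimp only
    rw [apply_gradient_dualNorm_eq_one hm hH hconv hhom hdiff hy hy',
      inner_gradient_dualNorm_self hy', mul_one, sub_self, sub_nonneg]
    rcases eq_or_ne ξ 0 with rfl | hξ
    · simp [show H 0 = 0 by simpa using hhom 0 0]
    · exact inner_le_dualNorm_mul hm hH y hξ
  have hcrit := hmin.hasFDerivAt_eq_zero
    (((hdiff ξ₀ hξ₀).hasFDerivAt.const_mul _).sub (innerSL ℝ y).hasFDerivAt)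
  refine ext_inner_right ℝ fun w => ?_
  have hw := congrArg (· w) hcrit
  simp only [sub_apply, smul_apply, zero_apply, innerSL_apply_apply, smul_eq_mul, sub_eq_zero] at hw
  rw [inner_gradient_left, real_inner_smul_left, ← hw, inv_mul_cancel_left₀ hH₀y.ne']

theorem apply_smul_smul_gradient (hhom : ∀ (t : ℝ) (ξ : E), H (t • ξ) = |t| * H ξ)
    (hdiff : ∀ ξ, ξ ≠ 0 → DifferentiableAt ℝ H ξ) {ξ : E} (hξ : ξ ≠ 0) (t : ℝ) :
    H (t • ξ) • ∇ H (t • ξ) = t • (H ξ • ∇ H ξ) := by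
  rcases eq_or_ne t 0 with rfl | ht
  · simp [show H 0 = 0 by simpa using hhom 0 0]
  have hcomp := (hdiff _ (smul_ne_zero ht hξ)).hasFDerivAt.comp ξ
    ((hasFDerivAt_id ξ).const_smul t)
  have hscaled : HasFDerivAt (fun ζ => H (t • ζ)) (|t| • fderiv ℝ H ξ) ξ := by
    simp_rw [hhom t]
    exact (hdiff ξ hξ).hasFDerivAt.const_mul |t|
  have hgrad : t • ∇ H (t • ξ) = |t| • ∇ H ξ := ext_inner_right ℝ fun w => by
    have := congrArg (· w) (hcomp.unique hscaled)
    simpa [real_inner_smul_left] using this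
  calc H (t • ξ) • ∇ H (t • ξ) = (H ξ * |t| / t) • (t • ∇ H (t • ξ)) := by
        rw [hhom, smul_smul]
        congr 1
        field_simp
    _ = t • (H ξ • ∇ H ξ) := by
        rw [hgrad, smul_smul, smul_smul]
        congr 1
        field_simp
        rw [sq_abs]

end Gradient

section Trace

variable {E : Type*} [NormedAddCommGroup E] [NormedSpace ℝ E] [FiniteDimensional ℝ E]

theorem trace_fderiv_smul_self {g : E → ℝ} {L : E →L[ℝ] ℝ} {x : E} (hg : HasFDerivAt g L x) :
    LinearMap.trace ℝ E (fderiv ℝ (fun y => g y • y) x) = finrank ℝ E * g x + L x := by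
  have hF : HasFDerivAt (fun y => g y • y) (g x • ContinuousLinearMap.id ℝ E + L.smulRight x) x :=
    hg.smul (hasFDerivAt_id x)
  rw [hF.fderiv]
  simp [LinearMap.trace_smulRight, mul_comm]

theorem trace_fderiv_rpow_neg_finrank_smul_self {ρ : E → ℝ} {L : E →L[ℝ] ℝ} {x : E}
    (hρ : HasFDerivAt ρ L x) (hpos : 0 < ρ x) (heuler : L x = ρ x) (c : ℝ) :
    LinearMap.trace ℝ E (fderiv ℝ (fun y => (c * ρ y ^ (-(finrank ℝ E : ℝ))) • y) x) = 0 := by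
  have hg : HasFDerivAt (fun y => c * ρ y ^ (-(finrank ℝ E : ℝ)))
      (c • ((-(finrank ℝ E : ℝ)) * ρ x ^ (-(finrank ℝ E : ℝ) - 1)) • L) x :=
    ((Real.hasDerivAt_rpow_const (Or.inl hpos.ne')).comp_hasFDerivAt x hρ).const_mul c
  rw [trace_fderiv_smul_self hg]
  simp only [smul_apply, heuler, smul_eq_mul, Real.rpow_sub_one hpos.ne']
  field_simp
  ring

end Trace

section Flux

variable {E : Type*} [NormedAddCommGroup E] [InnerProductSpace ℝ E] [CompleteSpace E]
  {H : E → ℝ} {m : ℝ}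

noncomputable def finslerFlux (H u : E → ℝ) (x : E) : E :=
  H (∇ u x) • ∇ H (∇ u x)

theorem finslerFlux_comp_dualNorm [Nontrivial E] (hm : 0 < m) (hH : ∀ ξ, m * ‖ξ‖ ≤ H ξ)
    (hconv : ConvexOn ℝ univ H) (hhom : ∀ (t : ℝ) (ξ : E), H (t • ξ) = |t| * H ξ)
    (hdiff : ∀ ξ, ξ ≠ 0 → DifferentiableAt ℝ H ξ) {y : E} (hy : y ≠ 0)
    (hy' : DifferentiableAt ℝ (dualNorm H) y) {f : ℝ → ℝ} {d : ℝ}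
    (hf : HasDerivAt f d (dualNorm H y)) :
    finslerFlux H (f ∘ dualNorm H) y = (d / dualNorm H y) • y := by
  rw [finslerFlux, (hf.hasGradientAt_comp hy'.hasGradientAt).gradient,
    apply_smul_smul_gradient hhom hdiff (gradient_dualNorm_ne_zero hm hH hy hy'),
    apply_gradient_dualNorm_eq_one hm hH hconv hhom hdiff hy hy',
    gradient_apply_gradient_dualNorm hm hH hconv hhom hdiff hy hy', one_smul, smul_smul,
    div_eq_mul_inv]

variable [FiniteDimensional ℝ E]

theorem trace_fderiv_finslerFlux_comp_dualNorm [Nontrivial E] (hm : 0 < m)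
    (hH : ∀ ξ, m * ‖ξ‖ ≤ H ξ) (hconv : ConvexOn ℝ univ H)
    (hhom : ∀ (t : ℝ) (ξ : E), H (t • ξ) = |t| * H ξ)
    (hdiff : ∀ ξ, ξ ≠ 0 → DifferentiableAt ℝ H ξ)
    (hdiff₀ : ∀ y, y ≠ 0 → DifferentiableAt ℝ (dualNorm H) y) {f : ℝ → ℝ} {c : ℝ}
    (hf : ∀ u, 0 < u → HasDerivAt f (c * u ^ (1 - (finrank ℝ E : ℝ))) u) {x : E} (hx : x ≠ 0) :
    LinearMap.trace ℝ E (fderiv ℝ (finslerFlux H (f ∘ dualNorm H)) x) = 0 := by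
  have hradial : finslerFlux H (f ∘ dualNorm H) =ᶠ[𝓝 x]
      fun y => (c * dualNorm H y ^ (-(finrank ℝ E : ℝ))) • y := by
    filter_upwards [isOpen_compl_singleton.mem_nhds hx] with y hy
    have hy₀ := dualNorm_pos hm hH hy
    rw [finslerFlux_comp_dualNorm hm hH hconv hhom hdiff hy (hdiff₀ y hy) (hf _ hy₀),
      mul_div_assoc, ← Real.rpow_sub_one hy₀.ne', sub_sub_cancel_left]
  rw [hradial.fderiv_eq]
  exact trace_fderiv_rpow_neg_finrank_smul_self (hdiff₀ x hx).hasFDerivAt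
    (dualNorm_pos hm hH hx) (fderiv_dualNorm_apply_self (hdiff₀ x hx)) c

end Flux

theorem EuclideanSpace.sum_inner_apply_single_eq_trace {N : ℕ}
    (A : EuclideanSpace ℝ (Fin N) →L[ℝ] EuclideanSpace ℝ (Fin N)) :
    ∑ i, ⟪A (EuclideanSpace.single i 1), EuclideanSpace.single i 1⟫ =
      LinearMap.trace ℝ _ (A : EuclideanSpace ℝ (Fin N) →ₗ[ℝ] EuclideanSpace ℝ (Fin N)) := by
  rw [LinearMap.trace_eq_sum_inner _ (EuclideanSpace.basisFun (Fin N) ℝ)]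
  simp [real_inner_comm]

section AnnulusProfile

variable (N : ℕ) (r R Cr CR : ℝ)

noncomputable def annulusProfile (u : ℝ) : ℝ :=
  if N = 2 then
    (Cr - CR) * (Real.log (u / R) / Real.log (r / R)) + CR
  else
    (Cr - CR) * ((u ^ ((2 : ℝ) - N) - R ^ ((2 : ℝ) - N)) /
      (r ^ ((2 : ℝ) - N) - R ^ ((2 : ℝ) - N))) + CR

theorem annulusProfile_inner_radius (hN : 2 ≤ N) (hr : 0 < r) (hrR : r < R) :
    annulusProfile N r R Cr CR r = Cr := by
  unfold annulusProfile
  split_ifs with hN2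
  · rw [div_self (Real.log_neg (div_pos hr (hr.trans hrR)) ((div_lt_one (hr.trans hrR)).2 hrR)).ne]
    ring
  · have hexp : (2 : ℝ) - N < 0 := by
      have : (3 : ℝ) ≤ N := by exact_mod_cast (show 3 ≤ N by omega)
      linarith
    rw [div_self (sub_ne_zero.2 (Real.rpow_lt_rpow_of_neg hr hrR hexp).ne')]
    ring

theorem annulusProfile_outer_radius : annulusProfile N r R Cr CR R = CR := by
  unfold annulusProfile
  split_ifs <;> simp

theorem exists_hasDerivAt_annulusProfile (hR : R ≠ 0) :
    ∃ c, ∀ u, 0 < u → HasDerivAt (annulusProfile N r R Cr CR) (c * u ^ ((1 : ℝ) - N)) u := by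
  by_cases hN2 : N = 2
  · refine ⟨(Cr - CR) / Real.log (r / R), fun u hu => ?_⟩
    have hprofile : annulusProfile N r R Cr CR =
        fun u => (Cr - CR) * (Real.log (u / R) / Real.log (r / R)) + CR := by
      funext u
      rw [annulusProfile, if_pos hN2]
    have hlog := ((hasDerivAt_id' u).div_const R).log (div_ne_zero hu.ne' hR)
    rw [hprofile]
    refine ((hlog.div_const (Real.log (r / R))).const_mul (Cr - CR)).add_const CR |>.congr_deriv ?_
    rw [hN2]
    norm_num [Real.rpow_neg_one]
    field_simp
  · refine ⟨(Cr - CR) * (2 - N) / (r ^ ((2 : ℝ) - N) - R ^ ((2 : ℝ) - N)), fun u hu => ?_⟩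
    have hprofile : annulusProfile N r R Cr CR = fun u => (Cr - CR) *
        ((u ^ ((2 : ℝ) - N) - R ^ ((2 : ℝ) - N)) / (r ^ ((2 : ℝ) - N) - R ^ ((2 : ℝ) - N)))
          + CR := by
      funext u
      rw [annulusProfile, if_neg hN2]
    have hpow := Real.hasDerivAt_rpow_const (p := (2 : ℝ) - N) (Or.inl hu.ne')
    rw [hprofile]
    refine (((hpow.sub_const _).div_const _).const_mul (Cr - CR)).add_const CR |>.congr_deriv ?_
    rw [show (2 : ℝ) - N - 1 = 1 - N by ring]
    ring

end AnnulusProfile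

theorem anisotropic_annulus_solution_general
    (N : ℕ) (hN : 2 ≤ N) (H H₀ : EuclideanSpace ℝ (Fin N) → ℝ)
    (hconv : ConvexOn ℝ Set.univ H)
    (hpos : ∀ ξ, 0 ≤ H ξ)
    (hdef : ∀ ξ, H ξ = 0 ↔ ξ = 0)
    (hhom : ∀ (t : ℝ) (ξ : EuclideanSpace ℝ (Fin N)), H (t • ξ) = |t| * H ξ)
    (hC2 : ContDiffOn ℝ 2 H {(0 : EuclideanSpace ℝ (Fin N))}ᶜ)
    (hdual : ∀ x, H₀ x
      = ⨆ ξ : {ξ : EuclideanSpace ℝ (Fin N) // ξ ≠ 0}, (inner ℝ x ξ.1 : ℝ) / H ξ.1)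
    (hC2₀ : ContDiffOn ℝ 2 H₀ {(0 : EuclideanSpace ℝ (Fin N))}ᶜ)
    (r R Cr CR : ℝ) (hr : 0 < r) (hrR : r < R)
    (v : EuclideanSpace ℝ (Fin N) → ℝ)
    (hv : ∀ x, v x =
      if N = 2 then
        (Cr - CR) * (Real.log (H₀ x / R) / Real.log (r / R)) + CR
      else
        (Cr - CR) * ((H₀ x ^ ((2 : ℝ) - N) - R ^ ((2 : ℝ) - N)) /
          (r ^ ((2 : ℝ) - N) - R ^ ((2 : ℝ) - N))) + CR)
    (X : EuclideanSpace ℝ (Fin N) → EuclideanSpace ℝ (Fin N))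
    (hX : ∀ x, X x = H (gradient v x) • gradient H (gradient v x)) :
    (∀ x, r < H₀ x → H₀ x < R →
      ∑ i : Fin N,
        (inner ℝ (fderiv ℝ X x (EuclideanSpace.single i 1)) (EuclideanSpace.single i 1) : ℝ)
          = 0) ∧
    (∀ x, H₀ x = r → v x = Cr) ∧ (∀ x, H₀ x = R → v x = CR) := by
  have : Nontrivial (EuclideanSpace ℝ (Fin N)) :=
    Module.nontrivial_of_finrank_pos (by rw [finrank_euclideanSpace_fin]; omega)
  obtain rfl : H₀ = dualNorm H := funext hdual
  obtain rfl : v = annulusProfile N r R Cr CR ∘ dualNorm H := funext hv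
  obtain rfl : X = finslerFlux H (annulusProfile N r R Cr CR ∘ dualNorm H) := funext hX
  have hdiff : ∀ ξ, ξ ≠ 0 → DifferentiableAt ℝ H ξ := fun ξ hξ =>
    (hC2.differentiableOn two_ne_zero).differentiableAt (isOpen_compl_singleton.mem_nhds hξ)
  have hdiff₀ : ∀ y, y ≠ 0 → DifferentiableAt ℝ (dualNorm H) y := fun y hy =>
    (hC2₀.differentiableOn two_ne_zero).differentiableAt (isOpen_compl_singleton.mem_nhds hy)
  obtain ⟨m, hm, hcoer⟩ := exists_pos_mul_norm_le hC2.continuousOn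
    (fun ξ hξ => (hpos ξ).lt_of_ne' (mt (hdef ξ).1 hξ)) hhom
  obtain ⟨c, hc⟩ := exists_hasDerivAt_annulusProfile N r R Cr CR (hr.trans hrR).ne'
  refine ⟨fun x hxr _ => ?_, fun x hx => ?_, fun x hx => ?_⟩
  · have hx : x ≠ 0 := by rintro rfl; rw [dualNorm_zero] at hxr; linarith
    rw [EuclideanSpace.sum_inner_apply_single_eq_trace]
    exact trace_fderiv_finslerFlux_comp_dualNorm hm hcoer hconv hhom hdiff hdiff₀
      (by rwa [finrank_euclideanSpace_fin]) hx
  · simp only [Function.comp_apply, hx, annulusProfile_inner_radius N r R Cr CR hN hr hrR]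
  · simp only [Function.comp_apply, hx, annulusProfile_outer_radius]

/-- The explicit radial function `v` (logarithmic for `N = 2`, power-type for
`N ≥ 3`) solves the anisotropic boundary value problem on the Wulff annulus:
`Δ_H v = div(H(∇v)∇H(∇v)) = 0` in `{r < H₀ < R}`, with `v = C_r` on `{H₀ = r}` and
`v = C_R` on `{H₀ = R}`. -/
theorem anisotropic_annulus_solution
    (N : ℕ) (hN : 2 ≤ N) (H H₀ : EuclideanSpace ℝ (Fin N) → ℝ)
    (hconv : ConvexOn ℝ Set.univ H)
    (hpos : ∀ ξ, 0 ≤ H ξ)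
    (hdef : ∀ ξ, H ξ = 0 ↔ ξ = 0)
    (hhom : ∀ (t : ℝ) (ξ : EuclideanSpace ℝ (Fin N)), H (t • ξ) = |t| * H ξ)
    (hC2 : ContDiffOn ℝ 2 H {(0 : EuclideanSpace ℝ (Fin N))}ᶜ)
    (hstrict : StrictConvex ℝ {ξ : EuclideanSpace ℝ (Fin N) | H ξ < 1})
    (hdual : ∀ x, H₀ x
      = ⨆ ξ : {ξ : EuclideanSpace ℝ (Fin N) // ξ ≠ 0}, (inner ℝ x ξ.1 : ℝ) / H ξ.1)
    (hC2₀ : ContDiffOn ℝ 2 H₀ {(0 : EuclideanSpace ℝ (Fin N))}ᶜ)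
    (r R Cr CR : ℝ) (hr : 0 < r) (hrR : r < R)
    (v : EuclideanSpace ℝ (Fin N) → ℝ)
    (hv : ∀ x, v x =
      if N = 2 then
        (Cr - CR) * (Real.log (H₀ x / R) / Real.log (r / R)) + CR
      else
        (Cr - CR) * ((H₀ x ^ ((2 : ℝ) - N) - R ^ ((2 : ℝ) - N)) /
          (r ^ ((2 : ℝ) - N) - R ^ ((2 : ℝ) - N))) + CR)
    (X : EuclideanSpace ℝ (Fin N) → EuclideanSpace ℝ (Fin N))
    (hX : ∀ x, X x = H (gradient v x) • gradient H (gradient v x)) :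
    (∀ x, r < H₀ x → H₀ x < R →
      ∑ i : Fin N,
        (inner ℝ (fderiv ℝ X x (EuclideanSpace.single i 1)) (EuclideanSpace.single i 1) : ℝ)
          = 0) ∧
    (∀ x, H₀ x = r → v x = Cr) ∧ (∀ x, H₀ x = R → v x = CR) :=
  anisotropic_annulus_solution_general N hN H H₀ hconv hpos hdef hhom hC2 hdual hC2₀ r R Cr CR hr
    hrR v hv X hX
end

section
/- Let H be a norm on ℝ^N satisfying the uniform ellipticity condition: there exist λ_*, λ* > 0 with (λ_*/|v|)|τ − (τ·v/|v|)(v/|v|)|² ≤ ⟨∇²H(v)τ, τ⟩ ≤ (λ*/|v|)|τ − (τ·v/|v|)(v/|v|)|² for all v ≠ 0 and all τ. Then the matrix A(ξ) = (1/2)∇²(H²)(ξ) satisfies 2μ₁ Id ≤ A(ξ) ≤ 2μ_N Id for all ξ ≠ 0, where μ₁, μ_N > 0 are constants depending only on λ_*, λ*, and the equivalence constants between H and the Euclidean norm; in particular A is uniformly elliptic with eigenvalues bounded away from 0 and ∞ independently of ξ. -/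
/-!
Since `A(ξ)[τ, τ] = H(ξ) ∇²H(ξ)[τ, τ] + (∇H(ξ)·τ)²`, split `τ = a ξ/|ξ| + p` with `p ⊥ ξ`.
Ellipticity pins the first term between multiples of `|p|²`. By Euler's identity
`∇H(ξ)·ξ = H(ξ)`, the second is `(a H(ξ)/|ξ| + ∇H(ξ)·p)²`, and `|∇H| ≤ c₂` because `H` is a
seminorm dominated by `c₂|·|`; so it is at most `c₂²|τ|²` and controls `a²` up to a multiple of
`|p|²`, which the first term absorbs.
-/

open Set Topology
open scoped RealInnerProductSpace

theorem le_mul_add_sq_add_mul_sq {a b r r₀ q c κ : ℝ} (hκ : 0 < κ) (hr₀ : 0 ≤ r₀)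
    (hr : r₀ ≤ r) (hq : q ^ 2 ≤ c ^ 2 * b ^ 2) :
    κ / (κ + c ^ 2) * min (r₀ ^ 2 / 2) κ * (a ^ 2 + b ^ 2) ≤ (a * r + q) ^ 2 + κ * b ^ 2 := by
  -- `m ≤ 1` and `κ = m (κ + c²)`: trading `(a r + q)²` for `m (a r + q)²` lets `κ b²` absorb
  -- the loss `m c² b²` while keeping `m κ b²`
  set m := κ / (κ + c ^ 2)
  have hm : 0 < m := by positivity
  have hm1 : m ≤ 1 := div_le_one_of_le₀ (by nlinarith [sq_nonneg c]) (by positivity)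
  have hmκ : m * (κ + c ^ 2) = κ := div_mul_cancel₀ κ (by positivity)
  -- `(x + q)² ≥ x²/2 - q²` because the difference is `(x + 2q)²/2`
  have hsq : (a * r) ^ 2 / 2 - q ^ 2 ≤ (a * r + q) ^ 2 := by nlinarith [sq_nonneg (a * r + 2 * q)]
  have har : r₀ ^ 2 * a ^ 2 ≤ (a * r) ^ 2 := by
    rw [mul_pow, mul_comm]; gcongr
  calc m * min (r₀ ^ 2 / 2) κ * (a ^ 2 + b ^ 2)
      = m * (min (r₀ ^ 2 / 2) κ * a ^ 2 + min (r₀ ^ 2 / 2) κ * b ^ 2) := by ring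
    _ ≤ m * (r₀ ^ 2 / 2 * a ^ 2 + κ * b ^ 2) := by
        gcongr
        exacts [min_le_left _ _, min_le_right _ _]
    _ ≤ m * ((a * r) ^ 2 / 2 - q ^ 2) + m * (κ + c ^ 2) * b ^ 2 := by
        nlinarith [mul_le_mul_of_nonneg_left hq hm.le]
    _ ≤ (a * r + q) ^ 2 + κ * b ^ 2 := by
        rw [hmκ]
        nlinarith [mul_le_mul_of_nonneg_left hsq hm.le, sq_nonneg (a * r + q)]

theorem ConvexOn.map_add_le_of_abs_homogeneous {E : Type*} [AddCommGroup E] [Module ℝ E]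
    {H : E → ℝ} (hconv : ConvexOn ℝ univ H) (hhom : ∀ (t : ℝ) (x : E), H (t • x) = |t| * H x)
    (x y : E) : H (x + y) ≤ H x + H y := by
  have hmid := hconv.2 (mem_univ x) (mem_univ y) (by norm_num : (0 : ℝ) ≤ 1 / 2)
    (by norm_num : (0 : ℝ) ≤ 1 / 2) (by norm_num)
  rw [← smul_add, hhom, abs_of_pos (by norm_num), smul_eq_mul, smul_eq_mul] at hmid
  linarith

theorem ConvexOn.norm_fderiv_le_of_abs_homogeneous {E : Type*} [NormedAddCommGroup E]
    [NormedSpace ℝ E] {H : E → ℝ} (hconv : ConvexOn ℝ univ H)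
    (hhom : ∀ (t : ℝ) (x : E), H (t • x) = |t| * H x) {c : ℝ} (hc : 0 ≤ c)
    (hle : ∀ x, H x ≤ c * ‖x‖) (x : E) : ‖fderiv ℝ H x‖ ≤ c := by
  let S : Seminorm ℝ E :=
    Seminorm.of H (hconv.map_add_le_of_abs_homogeneous hhom) fun t x => by
      rw [hhom, Real.norm_eq_abs]
  have hlip : LipschitzWith c.toNNReal H := LipschitzWith.of_dist_le' fun x y => by
    rw [Real.dist_eq, dist_eq_norm]
    exact (abs_sub_map_le_sub S x y).trans (hle (x - y))
  simpa [hc] using norm_fderiv_le_of_lipschitz ℝ hlip (x₀ := x)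

theorem fderiv_apply_self_of_homogeneous {E : Type*} [NormedAddCommGroup E] [NormedSpace ℝ E]
    {H : E → ℝ} {x : E} (hhom : ∀ t : ℝ, 0 < t → H (t • x) = t * H x)
    (hd : DifferentiableAt ℝ H x) : fderiv ℝ H x x = H x := by
  have hray : HasDerivAt (fun t : ℝ => t • x) x 1 := by
    simpa using (hasDerivAt_id (1 : ℝ)).smul_const x
  have hchain : HasDerivAt (fun t : ℝ => H (t • x)) (fderiv ℝ H x x) 1 := by
    have hd₁ : HasFDerivAt H (fderiv ℝ H x) ((1 : ℝ) • x) := by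
      rw [one_smul]; exact hd.hasFDerivAt
    simpa [Function.comp_def] using hd₁.comp_hasDerivAt 1 hray
  have hlinear : HasDerivAt (fun t : ℝ => H (t • x)) (H x) 1 := by
    have hray_eq : (fun t : ℝ => H (t • x)) =ᶠ[𝓝 1] fun t => t * H x := by
      filter_upwards [eventually_gt_nhds one_pos] with t ht using hhom t ht
    simpa using ((hasDerivAt_id (1 : ℝ)).mul_const (H x)).congr_of_eventuallyEq hray_eq
  exact hchain.unique hlinear

theorem fderiv_fderiv_sq_apply {E : Type*} [NormedAddCommGroup E] [NormedSpace ℝ E]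
    {H : E → ℝ} {x : E} (hH : ContDiffAt ℝ 2 H x) (τ : E) :
    fderiv ℝ (fun y => fderiv ℝ (fun z => H z ^ 2) y) x τ τ
      = 2 * H x * fderiv ℝ (fun y => fderiv ℝ H y) x τ τ + 2 * fderiv ℝ H x τ ^ 2 := by
  have hfirst : (fun y => fderiv ℝ (fun z => H z ^ 2) y) =ᶠ[𝓝 x]
      fun y => (2 * H y) • fderiv ℝ H y := by
    filter_upwards [hH.eventually (by simp)] with y hy
    simpa [Function.comp_def] using
      ((hasDerivAt_pow 2 (H y)).comp_hasFDerivAt y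
        (hy.differentiableAt (by simp)).hasFDerivAt).fderiv
  have hd : DifferentiableAt ℝ H x := hH.differentiableAt (by simp)
  have hd2 : DifferentiableAt ℝ (fun y => fderiv ℝ H y) x :=
    (hH.fderiv_right (m := 1) (by norm_num)).differentiableAt one_ne_zero
  have hprod : HasFDerivAt (fun y => (2 * H y) • fderiv ℝ H y)
      ((2 * H x) • fderiv ℝ (fun y => fderiv ℝ H y) x
        + ((2 : ℝ) • fderiv ℝ H x).smulRight (fderiv ℝ H x)) x :=
    (hd.hasFDerivAt.const_mul 2).smul hd2.hasFDerivAt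
  rw [hfirst.fderiv_eq, hprod.fderiv]
  simp only [add_apply, smul_apply, ContinuousLinearMap.smulRight_apply, smul_eq_mul]
  ring

theorem ContinuousLinearMap.apply_sq_le_of_norm_le {E : Type*} [NormedAddCommGroup E]
    [NormedSpace ℝ E] {f : E →L[ℝ] ℝ} {c : ℝ} (hf : ‖f‖ ≤ c) (v : E) :
    f v ^ 2 ≤ c ^ 2 * ‖v‖ ^ 2 := by
  have hfv : ‖f v‖ ≤ c * ‖v‖ := (f.le_opNorm v).trans (by gcongr)
  simpa only [Real.norm_eq_abs, sq_abs, mul_pow] using pow_le_pow_left₀ (norm_nonneg _) hfv 2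

theorem norm_sq_eq_inner_sq_add_norm_sub_sq {E : Type*} [NormedAddCommGroup E]
    [InnerProductSpace ℝ E] {e : E} (he : ‖e‖ = 1) (τ : E) :
    ‖τ‖ ^ 2 = ⟪τ, e⟫ ^ 2 + ‖τ - ⟪τ, e⟫ • e‖ ^ 2 := by
  rw [norm_sub_sq_real, real_inner_smul_right, norm_smul, he, mul_one, Real.norm_eq_abs, sq_abs]
  ring

section EllipticBounds

variable {E : Type*} [NormedAddCommGroup E] [InnerProductSpace ℝ E] {H : E → ℝ} {ξ τ : E}

theorem mul_norm_sq_le_mul_add_fderiv_sq {c₁ c₂ lam₁ Q : ℝ} (hc₁ : 0 < c₁) (hlam₁ : 0 < lam₁)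
    (hξ : ξ ≠ 0) (hd : DifferentiableAt ℝ H ξ) (hhom : ∀ t : ℝ, 0 < t → H (t • ξ) = t * H ξ)
    (hDH : ‖fderiv ℝ H ξ‖ ≤ c₂) (hHξ : c₁ * ‖ξ‖ ≤ H ξ)
    (hQ : lam₁ / ‖ξ‖ * ‖τ - ⟪τ, ‖ξ‖⁻¹ • ξ⟫ • (‖ξ‖⁻¹ • ξ)‖ ^ 2 ≤ Q) :
    c₁ * lam₁ / (c₁ * lam₁ + c₂ ^ 2) * min (c₁ ^ 2 / 2) (c₁ * lam₁) * ‖τ‖ ^ 2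
      ≤ H ξ * Q + fderiv ℝ H ξ τ ^ 2 := by
  set e := ‖ξ‖⁻¹ • ξ
  set a := ⟪τ, e⟫
  set p := τ - a • e
  have hξpos : 0 < ‖ξ‖ := norm_pos_iff.2 hξ
  have he : ‖e‖ = 1 := norm_smul_inv_norm hξ
  have hsplit : fderiv ℝ H ξ τ = a * (H ξ / ‖ξ‖) + fderiv ℝ H ξ p := by
    have hDe : fderiv ℝ H ξ e = H ξ / ‖ξ‖ := by
      rw [map_smul, smul_eq_mul, fderiv_apply_self_of_homogeneous hhom hd, inv_mul_eq_div]
    conv_lhs => rw [← sub_add_cancel τ (a • e)]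
    rw [map_add, map_smul, hDe, smul_eq_mul]
    ring
  have hr : c₁ ≤ H ξ / ‖ξ‖ := (le_div_iff₀ hξpos).2 hHξ
  have hHQ : c₁ * lam₁ * ‖p‖ ^ 2 ≤ H ξ * Q :=
    calc c₁ * lam₁ * ‖p‖ ^ 2 = c₁ * ‖ξ‖ * (lam₁ / ‖ξ‖ * ‖p‖ ^ 2) := by field_simp
      _ ≤ H ξ * Q := mul_le_mul hHξ hQ (by positivity) ((by positivity : 0 ≤ c₁ * ‖ξ‖).trans hHξ)
  rw [norm_sq_eq_inner_sq_add_norm_sub_sq he τ]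
  calc _ ≤ (a * (H ξ / ‖ξ‖) + fderiv ℝ H ξ p) ^ 2 + c₁ * lam₁ * ‖p‖ ^ 2 :=
        le_mul_add_sq_add_mul_sq (by positivity) hc₁.le hr
          (ContinuousLinearMap.apply_sq_le_of_norm_le hDH p)
    _ ≤ H ξ * Q + fderiv ℝ H ξ τ ^ 2 := by rw [hsplit]; linarith

theorem mul_add_fderiv_sq_le_mul_norm_sq {c₂ lam₂ Q : ℝ} (hc₂ : 0 ≤ c₂) (hlam₂ : 0 ≤ lam₂)
    (hξ : ξ ≠ 0) (hDH : ‖fderiv ℝ H ξ‖ ≤ c₂) (hHξ : H ξ ≤ c₂ * ‖ξ‖) (hQ₀ : 0 ≤ Q)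
    (hQ : Q ≤ lam₂ / ‖ξ‖ * ‖τ - ⟪τ, ‖ξ‖⁻¹ • ξ⟫ • (‖ξ‖⁻¹ • ξ)‖ ^ 2) :
    H ξ * Q + fderiv ℝ H ξ τ ^ 2 ≤ (c₂ ^ 2 + c₂ * lam₂) * ‖τ‖ ^ 2 := by
  set e := ‖ξ‖⁻¹ • ξ
  set p := τ - ⟪τ, e⟫ • e
  have hξpos : 0 < ‖ξ‖ := norm_pos_iff.2 hξ
  have hp : ‖p‖ ^ 2 ≤ ‖τ‖ ^ 2 := by
    rw [norm_sq_eq_inner_sq_add_norm_sub_sq (norm_smul_inv_norm hξ : ‖e‖ = 1) τ]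
    exact le_add_of_nonneg_left (sq_nonneg _)
  have hHQ : H ξ * Q ≤ c₂ * lam₂ * ‖τ‖ ^ 2 :=
    calc H ξ * Q ≤ c₂ * ‖ξ‖ * (lam₂ / ‖ξ‖ * ‖p‖ ^ 2) :=
          mul_le_mul hHξ hQ hQ₀ (by positivity)
      _ = c₂ * lam₂ * ‖p‖ ^ 2 := by field_simp
      _ ≤ c₂ * lam₂ * ‖τ‖ ^ 2 := by gcongr
  linarith [ContinuousLinearMap.apply_sq_le_of_norm_le hDH τ]

end EllipticBounds

theorem uniformly_elliptic_coefficients_general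
    (N : ℕ) (H : EuclideanSpace ℝ (Fin N) → ℝ)
    (hconv : ConvexOn ℝ Set.univ H)
    (hhom : ∀ (t : ℝ) (ξ : EuclideanSpace ℝ (Fin N)), H (t • ξ) = |t| * H ξ)
    (hC2 : ContDiffOn ℝ 2 H {(0 : EuclideanSpace ℝ (Fin N))}ᶜ)
    (c₁ c₂ : ℝ) (hc₁ : 0 < c₁) (hc₂ : 0 < c₂)
    (hequiv : ∀ ξ : EuclideanSpace ℝ (Fin N), c₁ * ‖ξ‖ ≤ H ξ ∧ H ξ ≤ c₂ * ‖ξ‖)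
    (lam₁ lam₂ : ℝ) (hlam₁ : 0 < lam₁) (hlam₂ : 0 < lam₂)
    (hell : ∀ v : EuclideanSpace ℝ (Fin N), v ≠ 0 → ∀ τ : EuclideanSpace ℝ (Fin N),
      lam₁ / ‖v‖ * ‖τ - ((inner ℝ τ (‖v‖⁻¹ • v) : ℝ)) • (‖v‖⁻¹ • v)‖ ^ 2
          ≤ fderiv ℝ (fun x => fderiv ℝ H x) v τ τ ∧
        fderiv ℝ (fun x => fderiv ℝ H x) v τ τ
          ≤ lam₂ / ‖v‖ * ‖τ - ((inner ℝ τ (‖v‖⁻¹ • v) : ℝ)) • (‖v‖⁻¹ • v)‖ ^ 2) :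
    ∃ μ₁ μN : ℝ, 0 < μ₁ ∧ 0 < μN ∧
      ∀ ξ : EuclideanSpace ℝ (Fin N), ξ ≠ 0 → ∀ τ : EuclideanSpace ℝ (Fin N),
        2 * μ₁ * ‖τ‖ ^ 2 ≤ (1 / 2 : ℝ) * fderiv ℝ (fun x => fderiv ℝ (fun y => H y ^ 2) x) ξ τ τ ∧
        (1 / 2 : ℝ) * fderiv ℝ (fun x => fderiv ℝ (fun y => H y ^ 2) x) ξ τ τ ≤ 2 * μN * ‖τ‖ ^ 2 := by
  refine ⟨c₁ * lam₁ / (c₁ * lam₁ + c₂ ^ 2) * min (c₁ ^ 2 / 2) (c₁ * lam₁) / 2,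
    (c₂ ^ 2 + c₂ * lam₂) / 2, by positivity, by positivity, fun ξ hξ τ => ?_⟩
  have hH : ContDiffAt ℝ 2 H ξ := hC2.contDiffAt (isOpen_compl_singleton.mem_nhds hξ)
  have hDH : ‖fderiv ℝ H ξ‖ ≤ c₂ :=
    hconv.norm_fderiv_le_of_abs_homogeneous hhom hc₂.le (fun x => (hequiv x).2) ξ
  obtain ⟨hQlow, hQup⟩ := hell ξ hξ τ
  have hlow := mul_norm_sq_le_mul_add_fderiv_sq hc₁ hlam₁ hξ (hH.differentiableAt (by simp))
    (fun t ht => by rw [hhom, abs_of_pos ht]) hDH (hequiv ξ).1 hQlow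
  have hup := mul_add_fderiv_sq_le_mul_norm_sq hc₂.le hlam₂.le hξ hDH (hequiv ξ).2
    ((by positivity : (0 : ℝ) ≤ _).trans hQlow) hQup
  rw [fderiv_fderiv_sq_apply hH]
  constructor <;> linarith

/-- If `H` is a uniformly elliptic norm on `ℝ^N` (the Hessian of `H` satisfies
`(λ_*/|v|)|τ − (τ·v/|v|)v/|v||² ≤ ⟨∇²H(v)τ, τ⟩ ≤ (λ*/|v|)|τ − (τ·v/|v|)v/|v||²` for `v ≠ 0`),
equivalent to the Euclidean norm with constants `c₁, c₂`, then the coefficient matrix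
`A(ξ) = (1/2)∇²(H²)(ξ)` satisfies `2μ₁ Id ≤ A(ξ) ≤ 2μ_N Id` for all `ξ ≠ 0`, with constants
`0 < μ₁ ≤ μ_N` independent of `ξ`. -/
theorem uniformly_elliptic_coefficients
    (N : ℕ) (H : EuclideanSpace ℝ (Fin N) → ℝ)
    (hconv : ConvexOn ℝ Set.univ H)
    (hpos : ∀ ξ, 0 ≤ H ξ)
    (hdef : ∀ ξ, H ξ = 0 ↔ ξ = 0)
    (hhom : ∀ (t : ℝ) (ξ : EuclideanSpace ℝ (Fin N)), H (t • ξ) = |t| * H ξ)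
    (hC2 : ContDiffOn ℝ 2 H {(0 : EuclideanSpace ℝ (Fin N))}ᶜ)
    (c₁ c₂ : ℝ) (hc₁ : 0 < c₁) (hc₂ : 0 < c₂)
    (hequiv : ∀ ξ : EuclideanSpace ℝ (Fin N), c₁ * ‖ξ‖ ≤ H ξ ∧ H ξ ≤ c₂ * ‖ξ‖)
    (lam₁ lam₂ : ℝ) (hlam₁ : 0 < lam₁) (hlam₂ : 0 < lam₂)
    (hell : ∀ v : EuclideanSpace ℝ (Fin N), v ≠ 0 → ∀ τ : EuclideanSpace ℝ (Fin N),
      lam₁ / ‖v‖ * ‖τ - ((inner ℝ τ (‖v‖⁻¹ • v) : ℝ)) • (‖v‖⁻¹ • v)‖ ^ 2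
          ≤ fderiv ℝ (fun x => fderiv ℝ H x) v τ τ ∧
        fderiv ℝ (fun x => fderiv ℝ H x) v τ τ
          ≤ lam₂ / ‖v‖ * ‖τ - ((inner ℝ τ (‖v‖⁻¹ • v) : ℝ)) • (‖v‖⁻¹ • v)‖ ^ 2) :
    ∃ μ₁ μN : ℝ, 0 < μ₁ ∧ 0 < μN ∧
      ∀ ξ : EuclideanSpace ℝ (Fin N), ξ ≠ 0 → ∀ τ : EuclideanSpace ℝ (Fin N),
        2 * μ₁ * ‖τ‖ ^ 2 ≤ (1 / 2 : ℝ) * fderiv ℝ (fun x => fderiv ℝ (fun y => H y ^ 2) x) ξ τ τ ∧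
        (1 / 2 : ℝ) * fderiv ℝ (fun x => fderiv ℝ (fun y => H y ^ 2) x) ξ τ τ ≤ 2 * μN * ‖τ‖ ^ 2 :=
  uniformly_elliptic_coefficients_general N H hconv hhom hC2 c₁ c₂ hc₁ hc₂ hequiv lam₁ lam₂ hlam₁
    hlam₂ hell
end
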